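/- arXiv:1002.0690 — 4 statements merged into one kernel-verified Lean document; each statement's English description precedes it below -/
import Mathlib

section
/- Let X be a locally weakly quasi-compact topological space, U an open subset, and V an open subset with V ⊂⊂ U. Then for any finite open covering {U_1,...,U_n} of U there exists a finite open covering {V_1,...,V_m} of V such that each V_j is contained in some U_{ε(j)} with V_j ⊂⊂ U_{ε(j)}. -/
open Set

/-- `RWQC V U` : the open set `V` is relatively weakly quasi-compact in `U`, i.e. every
open covering of `U` admits a finite subfamily covering `V`. -/
def RWQC {X : Type*} [TopologicalSpace X] (V U : Set X) : Prop :=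
  ∀ 𝒰 : Set (Set X), (∀ W ∈ 𝒰, IsOpen W) → U ⊆ ⋃₀ 𝒰 →
    ∃ 𝒱 ⊆ 𝒰, 𝒱.Finite ∧ V ⊆ ⋃₀ 𝒱

/-- A topological space is locally weakly quasi-compact if it satisfies LWC1-LWC3. -/
structure LocallyWeaklyQuasiCompact (X : Type*) [TopologicalSpace X] : Prop where
  lwc1 : ∀ U : Set X, IsOpen U → ∀ x ∈ U, ∀ N ∈ nhds x,
    ∃ V : Set X, IsOpen V ∧ x ∈ V ∧ V ⊆ N ∧ RWQC V U
  lwc2 : ∀ U V U' V' : Set X, IsOpen U → IsOpen V → IsOpen U' → IsOpen V' →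
    RWQC U' U → RWQC V' V → RWQC (U' ∩ V') (U ∩ V)
  lwc3 : ∀ U U' : Set X, IsOpen U → IsOpen U' → RWQC U' U →
    ∃ W : Set X, IsOpen W ∧ RWQC U' W ∧ RWQC W U

/-!
Refine the covering `c` to the family of all open `W` with `W ⊂⊂ c i` for some `i`; by LWC1
this family still covers `U`, so `V ⊂⊂ U` yields finitely many of its members covering `V`.
Intersecting them with `V` gives the `V_j`.
-/

section

variable {X : Type*} [TopologicalSpace X]

theorem RWQC.mono_left {V V' U : Set X} (h : RWQC V U) (hV' : V' ⊆ V) : RWQC V' U :=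
  fun 𝒰 hopen hcov ↦
    let ⟨𝒱, h𝒱, hfin, hV⟩ := h 𝒰 hopen hcov
    ⟨𝒱, h𝒱, hfin, hV'.trans hV⟩

theorem RWQC.exists_fin_subcover {V U : Set X} (h : RWQC V U) {𝒰 : Set (Set X)}
    (hopen : ∀ W ∈ 𝒰, IsOpen W) (hcov : U ⊆ ⋃₀ 𝒰) :
    ∃ (m : ℕ) (f : Fin m → Set X), (∀ j, f j ∈ 𝒰) ∧ V ⊆ ⋃ j, f j := by
  obtain ⟨𝒱, h𝒱, hfin, hV⟩ := h 𝒰 hopen hcov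
  obtain ⟨m, f, -, rfl⟩ := hfin.fin_param
  exact ⟨m, f, fun j ↦ h𝒱 (mem_range_self j), by rwa [sUnion_range] at hV⟩

theorem LocallyWeaklyQuasiCompact.subset_sUnion_rwqc (hX : LocallyWeaklyQuasiCompact X)
    {ι : Type*} {U : Set X} {c : ι → Set X} (hc : ∀ i, IsOpen (c i)) (hcov : U ⊆ ⋃ i, c i) :
    U ⊆ ⋃₀ {W | IsOpen W ∧ ∃ i, W ⊆ c i ∧ RWQC W (c i)} := by
  intro x hx
  obtain ⟨i, hxi⟩ := mem_iUnion.1 (hcov hx)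
  obtain ⟨W, hW, hxW, hWc, hWR⟩ := hX.lwc1 (c i) (hc i) x hxi (c i) ((hc i).mem_nhds hxi)
  exact ⟨W, ⟨hW, i, hWc, hWR⟩, hxW⟩

end

theorem stmt_6_general {X : Type*} [TopologicalSpace X]
    (hX : LocallyWeaklyQuasiCompact X) (U V : Set X)
    (hV : IsOpen V) (hVU : RWQC V U)
    (n : ℕ) (c : Fin n → Set X) (hc : ∀ i, IsOpen (c i)) (hcov : U ⊆ ⋃ i, c i) :
    ∃ (m : ℕ) (d : Fin m → Set X) (ε : Fin m → Fin n),
      (∀ j, IsOpen (d j)) ∧ (∀ j, d j ⊆ V) ∧ V ⊆ ⋃ j, d j ∧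
      ∀ j, d j ⊆ c (ε j) ∧ RWQC (d j) (c (ε j)) := by
  obtain ⟨m, f, hf, hVf⟩ :=
    hVU.exists_fin_subcover (fun W hW ↦ hW.1) (hX.subset_sUnion_rwqc hc hcov)
  choose ε hfε hfR using fun j ↦ (hf j).2
  refine ⟨m, fun j ↦ f j ∩ V, ε, fun j ↦ (hf j).1.inter hV, fun j ↦ inter_subset_right,
    ?_, fun j ↦ ⟨inter_subset_left.trans (hfε j), (hfR j).mono_left inter_subset_left⟩⟩
  rw [← iUnion_inter]
  exact subset_inter hVf subset_rfl

theorem stmt_6 {X : Type*} [TopologicalSpace X]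
    (hX : LocallyWeaklyQuasiCompact X) (U V : Set X)
    (hU : IsOpen U) (hV : IsOpen V) (hVU : RWQC V U)
    (n : ℕ) (c : Fin n → Set X) (hc : ∀ i, IsOpen (c i)) (hcov : U ⊆ ⋃ i, c i) :
    ∃ (m : ℕ) (d : Fin m → Set X) (ε : Fin m → Fin n),
      (∀ j, IsOpen (d j)) ∧ (∀ j, d j ⊆ V) ∧ V ⊆ ⋃ j, d j ∧
      ∀ j, d j ⊆ c (ε j) ∧ RWQC (d j) (c (ε j)) :=
  stmt_6_general hX U V hV hVU n c hc hcov
end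

section
/- Let X be a locally weakly quasi-compact space admitting a countable cover {U_n}_{n∈ℕ} by open sets with U_n ⊂⊂ X. Then there exists an open covering {V_n}_{n∈ℕ} of X such that V_n ⊂⊂ V_{n+1} and V_n ⊂⊂ X for each n. -/
open Set

/- Starting from `V 0 = U 0`, apply LWC3 inside `X` to get `V n ⊂⊂ W ⊂⊂ X` and put
`V (n + 1) = W ∪ U (n + 1)`; since `⊂⊂` is preserved by enlarging the right-hand side and by
finite unions on the left, `V n ⊂⊂ V (n + 1)` and `V (n + 1) ⊂⊂ X`, and `U n ⊆ V n` makes the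
`V n` a cover. -/

theorem exists_seq_of_exists_succ {α : Type*} {P : ℕ → α → Prop} {R : α → α → Prop}
    (h₀ : ∃ a, P 0 a) (hsucc : ∀ n a, P n a → ∃ b, P (n + 1) b ∧ R a b) :
    ∃ f : ℕ → α, ∀ n, P n (f n) ∧ R (f n) (f (n + 1)) := by
  obtain ⟨a₀, ha₀⟩ := h₀
  have : Nonempty α := ⟨a₀⟩
  choose! next hnextP hnextR using hsucc
  let f : ℕ → α := fun n => Nat.rec a₀ next n
  have hf : ∀ n, P n (f n) := by
    intro n
    induction n with
    | zero => exact ha₀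
    | succ n ih => exact hnextP n _ ih
  exact ⟨f, fun n => ⟨hf n, hnextR n _ (hf n)⟩⟩

namespace RWQC

variable {X : Type*} [TopologicalSpace X]

theorem mono_right {A W W' : Set X} (h : RWQC A W) (hWW' : W ⊆ W') : RWQC A W' :=
  fun 𝒰 hopen hcover => h 𝒰 hopen (hWW'.trans hcover)

theorem union {A B W : Set X} (hA : RWQC A W) (hB : RWQC B W) : RWQC (A ∪ B) W := by
  intro 𝒰 hopen hcover
  obtain ⟨𝒱, h𝒱𝒰, h𝒱fin, hA𝒱⟩ := hA 𝒰 hopen hcover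
  obtain ⟨𝒲, h𝒲𝒰, h𝒲fin, hB𝒲⟩ := hB 𝒰 hopen hcover
  refine ⟨𝒱 ∪ 𝒲, union_subset h𝒱𝒰 h𝒲𝒰, h𝒱fin.union h𝒲fin, ?_⟩
  rw [sUnion_union]
  exact union_subset_union hA𝒱 hB𝒲

end RWQC

namespace LocallyWeaklyQuasiCompact

variable {X : Type*} [TopologicalSpace X]

theorem exists_isOpen_superset_rwqc (hX : LocallyWeaklyQuasiCompact X) {U V A : Set X}
    (hU : IsOpen U) (hV : IsOpen V) (hA : IsOpen A) (hVU : RWQC V U) (hAU : RWQC A U) :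
    ∃ W, IsOpen W ∧ A ⊆ W ∧ RWQC V W ∧ RWQC W U := by
  obtain ⟨W, hW, hVW, hWU⟩ := hX.lwc3 U V hU hV hVU
  exact ⟨W ∪ A, hW.union hA, subset_union_right, hVW.mono_right subset_union_left,
    hWU.union hAU⟩

theorem exists_rwqc_chain (hX : LocallyWeaklyQuasiCompact X) {U : Set X} (hU : IsOpen U)
    (A : ℕ → Set X) (hA : ∀ n, IsOpen (A n)) (hAU : ∀ n, RWQC (A n) U) :
    ∃ V : ℕ → Set X, ∀ n, (IsOpen (V n) ∧ A n ⊆ V n ∧ RWQC (V n) U) ∧ RWQC (V n) (V (n + 1)) := by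
  refine exists_seq_of_exists_succ (P := fun n V => IsOpen V ∧ A n ⊆ V ∧ RWQC V U)
    ⟨A 0, hA 0, subset_rfl, hAU 0⟩ ?_
  rintro n V ⟨hV, -, hVU⟩
  obtain ⟨W, hW, hAW, hVW, hWU⟩ :=
    hX.exists_isOpen_superset_rwqc hU hV (hA (n + 1)) hVU (hAU (n + 1))
  exact ⟨W, ⟨hW, hAW, hWU⟩, hVW⟩

end LocallyWeaklyQuasiCompact

theorem stmt_7 {X : Type*} [TopologicalSpace X]
    (hX : LocallyWeaklyQuasiCompact X) (U : ℕ → Set X)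
    (hUo : ∀ n, IsOpen (U n)) (hUcov : (⋃ n, U n) = Set.univ)
    (hUc : ∀ n, RWQC (U n) Set.univ) :
    ∃ V : ℕ → Set X, (∀ n, IsOpen (V n)) ∧ (⋃ n, V n) = Set.univ ∧
      ∀ n, RWQC (V n) (V (n + 1)) ∧ RWQC (V n) Set.univ := by
  obtain ⟨V, hV⟩ := hX.exists_rwqc_chain isOpen_univ U hUo hUc
  refine ⟨V, fun n => (hV n).1.1, ?_, fun n => ⟨(hV n).2, (hV n).1.2.2⟩⟩
  exact eq_univ_of_univ_subset <| hUcov ▸ iUnion_mono fun n => (hV n).1.2.1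
end

section
/- Let X be a quasi-compact, locally weakly quasi-compact space and let {F_i}_{i∈I} be a filtered inductive system of sheaves of k-modules on X. Then the natural morphism colim_i Γ(X; F_i) → Γ(X; colim_i F_i) is an isomorphism, where colim_i F_i denotes the colimit in the category of sheaves. -/
/-!
The colimit sheaf `colim F` is the sheafification of the presheaf colimit, so a section of
`colim F` is locally a section of some `F i`, and two sections of `F i` with the same image in
`colim F` agree locally at some later stage. If `O ⊂⊂ D`, finitely many of these local pieces
cover `O`, so an equality on `D` holding locally at finite stages holds on `O` at a single stage.
With `O = D = X` this gives injectivity. For surjectivity, cover `X` by finitely many `W a ⊂⊂ V a`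
(LWC1) on which a global section `t` of `colim F` comes from `σ a ∈ F j (V a)`. Since
`W a ∩ W b ⊂⊂ V a ∩ V b` (LWC2), at one stage the restrictions of the `σ a` to the `W a` are
compatible; they glue to a global section of `F l`, which maps to `t`.
-/

open Set

open CategoryTheory CategoryTheory.Limits TopologicalSpace Opposite

/-- The global sections functor on sheaves of `k`-modules. -/
noncomputable def globalSections (k : Type) [CommRing k] (X : Type) [TopologicalSpace X] :
    Sheaf (Opens.grothendieckTopology X) (ModuleCat k) ⥤ ModuleCat k :=
  sheafToPresheaf _ _ ⋙ (evaluation (Opens X)ᵒᵖ (ModuleCat k)).obj (op ⊤)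

theorem IsCompact.rwqc_self {X : Type*} [TopologicalSpace X] {U : Set X} (hU : IsCompact U) :
    RWQC U U := fun 𝒰 h𝒰 hU𝒰 => by
  obtain ⟨𝒱, h𝒱, h𝒱fin, hU𝒱⟩ :=
    hU.elim_finite_subcover_image (c := fun W => W) h𝒰 (by rwa [← sUnion_eq_biUnion])
  exact ⟨𝒱, h𝒱, h𝒱fin, by rwa [sUnion_eq_biUnion]⟩

namespace SheafFilteredColimit

section Site

variable {C : Type} [SmallCategory C] {J : GrothendieckTopology C} {k : Type} [CommRing k]
  {I : Type} [SmallCategory I] (F : I ⥤ Sheaf J (ModuleCat.{0} k))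

noncomputable def colimitComparison :
    colimit (F ⋙ sheafToPresheaf J _) ⟶ (colimit F).obj :=
  colimit.desc _ ((sheafToPresheaf J _).mapCocone (colimit.cocone F))

theorem colimit_ι_comp_colimitComparison (i : I) :
    colimit.ι (F ⋙ sheafToPresheaf J _) i ≫ colimitComparison F = (colimit.ι F i).hom :=
  colimit.ι_desc _ _

noncomputable def colimitIsoSheafify :
    (colimit F).obj ≅ sheafify J (colimit (F ⋙ sheafToPresheaf J _)) :=
  (sheafToPresheaf J _).mapIso (colimit.isoColimitCocone
    ⟨_, Sheaf.isColimitSheafifyCocone _ (colimit.isColimit (F ⋙ sheafToPresheaf J _))⟩)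

theorem colimitComparison_eq :
    colimitComparison F =
      toSheafify J (colimit (F ⋙ sheafToPresheaf J _)) ≫ (colimitIsoSheafify F).inv := by
  refine colimit.hom_ext fun i => ?_
  rw [colimitComparison, colimit.ι_desc, ← Category.assoc, Iso.eq_comp_inv]
  change (sheafToPresheaf J _).map (colimit.ι F i) ≫
    (sheafToPresheaf J _).map (colimit.isoColimitCocone _).hom = _
  rw [← Functor.map_comp, colimit.isoColimitCocone_ι_hom]
  exact Sheaf.sheafifyCocone_ι_app_val _ i

instance : Presheaf.IsLocallyInjective J (colimitComparison F) := by
  rw [colimitComparison_eq]; infer_instance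

instance : Presheaf.IsLocallySurjective J (colimitComparison F) := by
  rw [colimitComparison_eq]; infer_instance

def EventuallyEq {i : I} {U : Cᵒᵖ} (s s' : (F.obj i).obj.obj U) : Prop :=
  ∃ (j : I) (g : i ⟶ j), (F.map g).hom.app U s = (F.map g).hom.app U s'

variable {F}

theorem EventuallyEq.map {i : I} {U V : Cᵒᵖ} (f : U ⟶ V) {s s' : (F.obj i).obj.obj U}
    (h : EventuallyEq F s s') :
    EventuallyEq F ((F.obj i).obj.map f s) ((F.obj i).obj.map f s') := by
  obtain ⟨j, g, hg⟩ := h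
  exact ⟨j, g, by rw [NatTrans.naturality_apply, hg, ← NatTrans.naturality_apply]⟩

theorem colimit_ι_app_map {i j : I} (g : i ⟶ j) (U : Cᵒᵖ) (s : (F.obj i).obj.obj U) :
    (colimit.ι F j).hom.app U ((F.map g).hom.app U s) = (colimit.ι F i).hom.app U s := by
  rw [← ConcreteCategory.comp_apply, ← NatTrans.comp_app,
    ← ObjectProperty.FullSubcategory.comp_hom, colimit.w]

variable [IsFiltered I]

theorem exists_hom_forall_eq_of_finite {ι : Type*} [Finite ι] {i : I} {U : ι → Cᵒᵖ}
    {s s' : ∀ a, (F.obj i).obj.obj (U a)} (h : ∀ a, EventuallyEq F (s a) (s' a)) :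
    ∃ (j : I) (g : i ⟶ j), ∀ a, (F.map g).hom.app (U a) (s a) = (F.map g).hom.app (U a) (s' a) := by
  choose j g hg using h
  obtain ⟨l, f, g', hg'⟩ := IsFiltered.wideSpan g
  refine ⟨l, f, fun a => ?_⟩
  simp only [← hg' a, F.map_comp, ObjectProperty.FullSubcategory.comp_hom, NatTrans.comp_app,
    ConcreteCategory.comp_apply, hg a]

variable (F)

theorem exists_covering_eventuallyEq {i : I} {U : C} (s s' : (F.obj i).obj.obj (op U))
    (h : (colimit.ι F i).hom.app (op U) s = (colimit.ι F i).hom.app (op U) s') :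
    ∃ S ∈ J U, ∀ ⦃V : C⦄ (f : V ⟶ U), S f →
      EventuallyEq F ((F.obj i).obj.map f.op s) ((F.obj i).obj.map f.op s') := by
  let ι := colimit.ι (F ⋙ sheafToPresheaf J _) i
  refine ⟨_, Presheaf.equalizerSieve_mem J (colimitComparison F) (ι.app _ s) (ι.app _ s') ?_,
    fun V f hf => ?_⟩
  · rwa [← ConcreteCategory.comp_apply, ← ConcreteCategory.comp_apply, ← NatTrans.comp_app,
      colimit_ι_comp_colimitComparison]
  · rw [Presheaf.equalizerSieve_apply, ← NatTrans.naturality_apply,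
      ← NatTrans.naturality_apply] at hf
    exact (isColimitOfPreserves ((evaluation _ _).obj (op V)) (colimit.isColimit _)).eq_iff' _ _
      |>.1 hf

theorem exists_covering_colimit_ι_eq {U : C} (t : (colimit F).obj.obj (op U)) :
    ∃ S ∈ J U, ∀ ⦃V : C⦄ (f : V ⟶ U), S f →
      ∃ (i : I) (s : (F.obj i).obj.obj (op V)),
        (colimit.ι F i).hom.app (op V) s = (colimit F).obj.map f.op t := by
  refine ⟨_, Presheaf.imageSieve_mem J (colimitComparison F) t, fun V f ⟨p, hp⟩ => ?_⟩
  obtain ⟨i, s, rfl⟩ := Concrete.isColimit_exists_rep _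
    (isColimitOfPreserves ((evaluation _ _).obj (op V)) (colimit.isColimit _)) p
  refine ⟨i, s, ?_⟩
  rw [← hp, ← colimit_ι_comp_colimitComparison]
  rfl

end Site

section Topological

variable {X : Type} [TopologicalSpace X] {k : Type} [CommRing k]

theorem map_map_eq {P : (Opens X)ᵒᵖ ⥤ ModuleCat.{0} k} {U V W : Opens X} (f : V ⟶ U)
    (g : W ⟶ V) (h : W ⟶ U) (s : P.obj (op U)) : P.map g.op (P.map f.op s) = P.map h.op s := by
  rw [← ConcreteCategory.comp_apply, ← P.map_comp]
  rfl

variable {I : Type} [SmallCategory I] [IsFiltered I]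
  {F : I ⥤ Sheaf (Opens.grothendieckTopology X) (ModuleCat.{0} k)}

theorem eventuallyEq_of_finite_cover {ι : Type*} [Finite ι] {U : Opens X} (V : ι → Opens X)
    (f : ∀ a, V a ⟶ U) (hV : U ≤ ⨆ a, V a) {i : I} {s s' : (F.obj i).obj.obj (op U)}
    (h : ∀ a, EventuallyEq F ((F.obj i).obj.map (f a).op s) ((F.obj i).obj.map (f a).op s')) :
    EventuallyEq F s s' := by
  obtain ⟨j, g, hg⟩ := exists_hom_forall_eq_of_finite h
  refine ⟨j, g, TopCat.Sheaf.eq_of_locally_eq' (X := TopCat.of X) (F.obj j) V U f hV _ _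
    fun a => ?_⟩
  rw [← NatTrans.naturality_apply, ← NatTrans.naturality_apply]
  exact hg a

theorem eventuallyEq_of_rwqc {D O : Opens X} (f : O ⟶ D) (hOD : RWQC (O : Set X) D) {i : I}
    {s s' : (F.obj i).obj.obj (op D)}
    (h : (colimit.ι F i).hom.app (op D) s = (colimit.ι F i).hom.app (op D) s') :
    EventuallyEq F ((F.obj i).obj.map f.op s) ((F.obj i).obj.map f.op s') := by
  obtain ⟨S, hS, hloc⟩ := exists_covering_eventuallyEq F s s' h
  obtain ⟨𝒱, h𝒱, h𝒱fin, hO⟩ := hOD {W | ∃ (V : Opens X) (g : V ⟶ D), S g ∧ (V : Set X) = W}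
    (by rintro _ ⟨V, -, -, rfl⟩; exact V.2)
    (fun x hx => by obtain ⟨V, g, hg, hx⟩ := hS x hx; exact ⟨V, ⟨V, g, hg, rfl⟩, hx⟩)
  have := h𝒱fin.to_subtype
  choose V g hg hVW using fun W : 𝒱 => h𝒱 W.2
  refine eventuallyEq_of_finite_cover (fun W => V W ⊓ O) (fun W => homOfLE inf_le_right)
    (fun x hx => ?_) (fun W => ?_)
  · obtain ⟨W, hW, hxW⟩ := hO hx
    have hxV : x ∈ (V ⟨W, hW⟩ : Set X) := (hVW ⟨W, hW⟩).symm ▸ hxW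
    exact Opens.mem_iSup.2 ⟨⟨W, hW⟩, hxV, hx⟩
  · have := (hloc (g W) (hg W)).map (homOfLE (inf_le_left : V W ⊓ O ≤ V W)).op
    rwa [map_map_eq (h := homOfLE inf_le_left ≫ g W), map_map_eq (h := homOfLE inf_le_left ≫ g W),
      ← map_map_eq (f := f) (g := homOfLE inf_le_right),
      ← map_map_eq (f := f) (g := homOfLE inf_le_right)] at this

theorem eventuallyEq_of_isCompact {U : Opens X} (hU : IsCompact (U : Set X)) {i : I}
    {s s' : (F.obj i).obj.obj (op U)}
    (h : (colimit.ι F i).hom.app (op U) s = (colimit.ι F i).hom.app (op U) s') :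
    EventuallyEq F s s' := by
  simpa using eventuallyEq_of_rwqc (𝟙 U) hU.rwqc_self h

theorem exists_hom_isCompatible (hX : LocallyWeaklyQuasiCompact X) {ι : Type*} [Finite ι]
    {U : Opens X} {V W : ι → Opens X} (e : ∀ a, V a ⟶ U) (f : ∀ a, W a ⟶ V a)
    (hWV : ∀ a, RWQC (W a : Set X) (V a)) (t : (colimit F).obj.obj (op U)) {j : I}
    (σ : ∀ a, (F.obj j).obj.obj (op (V a)))
    (hσ : ∀ a, (colimit.ι F j).hom.app _ (σ a) = (colimit F).obj.map (e a).op t) :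
    ∃ (l : I) (g : j ⟶ l), TopCat.Presheaf.IsCompatible (X := TopCat.of X) (F.obj l).obj W
      fun a => (F.map g).hom.app _ ((F.obj j).obj.map (f a).op (σ a)) := by
  have key : ∀ p : ι × ι, EventuallyEq F
      ((F.obj j).obj.map (homOfLE (inf_le_left.trans (f p.1).le)).op (σ p.1) :
        (F.obj j).obj.obj (op (W p.1 ⊓ W p.2)))
      ((F.obj j).obj.map (homOfLE (inf_le_right.trans (f p.2).le)).op (σ p.2)) := by
    rintro ⟨a, b⟩
    have := eventuallyEq_of_rwqc (homOfLE (inf_le_inf (f a).le (f b).le))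
      (hX.lwc2 _ _ _ _ (V a).2 (V b).2 (W a).2 (W b).2 (hWV a) (hWV b))
      (s := (F.obj j).obj.map (homOfLE inf_le_left).op (σ a))
      (s' := (F.obj j).obj.map (homOfLE inf_le_right).op (σ b))
      (by rw [NatTrans.naturality_apply, NatTrans.naturality_apply, hσ, hσ, map_map_eq,
        map_map_eq (h := homOfLE (inf_le_left.trans (e a).le))])
    rwa [map_map_eq, map_map_eq] at this
  obtain ⟨l, g, hg⟩ := exists_hom_forall_eq_of_finite key
  refine ⟨l, g, fun a b => ?_⟩
  rw [← NatTrans.naturality_apply, ← NatTrans.naturality_apply, map_map_eq, map_map_eq]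
  exact hg (a, b)

theorem exists_colimit_ι_eq_of_finite_cover (hX : LocallyWeaklyQuasiCompact X) {ι : Type*}
    [Finite ι] {U : Opens X} {V W : ι → Opens X} (e : ∀ a, V a ⟶ U) (f : ∀ a, W a ⟶ V a)
    (hWV : ∀ a, RWQC (W a : Set X) (V a)) (hU : U ≤ ⨆ a, W a) (t : (colimit F).obj.obj (op U))
    {j : I} (σ : ∀ a, (F.obj j).obj.obj (op (V a)))
    (hσ : ∀ a, (colimit.ι F j).hom.app _ (σ a) = (colimit F).obj.map (e a).op t) :
    ∃ (l : I) (s : (F.obj l).obj.obj (op U)), (colimit.ι F l).hom.app _ s = t := by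
  obtain ⟨l, g, hcompat⟩ := exists_hom_isCompatible hX e f hWV t σ hσ
  obtain ⟨s, hs, -⟩ := TopCat.Sheaf.existsUnique_gluing' (X := TopCat.of X) (F.obj l) W U
    (fun a => f a ≫ e a) hU _ hcompat
  refine ⟨l, s, TopCat.Sheaf.eq_of_locally_eq' (X := TopCat.of X)
    (colimit F : Sheaf (Opens.grothendieckTopology X) (ModuleCat k)) W U
    (fun a => f a ≫ e a) hU _ _ fun a => ?_⟩
  rw [← NatTrans.naturality_apply, hs a, colimit_ι_app_map, NatTrans.naturality_apply, hσ a,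
    map_map_eq]

theorem exists_colimit_ι_eq_of_compactSpace [CompactSpace X] (hX : LocallyWeaklyQuasiCompact X)
    (t : (colimit F).obj.obj (op ⊤)) :
    ∃ (l : I) (s : (F.obj l).obj.obj (op ⊤)), (colimit.ι F l).hom.app _ s = t := by
  classical
  obtain ⟨S, hS, hloc⟩ := exists_covering_colimit_ι_eq F t
  have hpt : ∀ x : X, ∃ (V W : Opens X) (i : I) (σ : (F.obj i).obj.obj (op V)) (_ : W ⟶ V),
      x ∈ W ∧ RWQC (W : Set X) V ∧
        (colimit.ι F i).hom.app _ σ = (colimit F).obj.map (homOfLE le_top).op t := by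
    intro x
    obtain ⟨V, e, he, hxV⟩ := hS x trivial
    obtain ⟨i, σ, hσ⟩ := hloc e he
    obtain ⟨W, hW, hxW, hWV, hrw⟩ := hX.lwc1 V V.2 x hxV V (V.2.mem_nhds hxV)
    exact ⟨V, ⟨W, hW⟩, i, σ, homOfLE hWV, hxW, hrw, hσ⟩
  choose V W i σ f hxW hWV hσ using hpt
  obtain ⟨T, hT⟩ := isCompact_univ.elim_finite_subcover (fun x => (W x : Set X))
    (fun x => (W x).2) (fun x _ => mem_iUnion.2 ⟨x, hxW x⟩)
  obtain ⟨j, hj⟩ := IsFiltered.sup_objs_exists (T.image i)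
  have g := fun x : T => (hj (Finset.mem_image_of_mem i x.2)).some
  refine exists_colimit_ι_eq_of_finite_cover hX (fun x : T => homOfLE le_top) (fun x => f x)
    (fun x => hWV x) (fun z _ => ?_) t (fun x => (F.map (g x)).hom.app _ (σ x))
    (fun x => by rw [colimit_ι_app_map, hσ])
  obtain ⟨x, hx, hz⟩ := mem_iUnion₂.1 (hT (mem_univ z))
  exact Opens.mem_iSup.2 ⟨⟨x, hx⟩, hz⟩

end Topological

end SheafFilteredColimit

/-- For a quasi-compact locally weakly quasi-compact space, the natural morphism
`colim_i Γ(X;F_i) → Γ(X; colim_i F_i)` is an isomorphism for filtered systems of sheaves. -/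
theorem stmt_8 {k : Type} [CommRing k] {X : Type} [TopologicalSpace X]
    [CompactSpace X] (hX : LocallyWeaklyQuasiCompact X)
    {I : Type} [SmallCategory I] [IsFiltered I]
    (F : I ⥤ Sheaf (Opens.grothendieckTopology X) (ModuleCat k)) :
    IsIso (colimit.post F (globalSections k X)) := by
  have hpost (i : I) (s : (F.obj i).obj.obj (op ⊤)) :
      colimit.post F (globalSections k X) (colimit.ι (F ⋙ globalSections k X) i s) =
        (colimit.ι F i).hom.app (op ⊤) s :=
    ConcreteCategory.congr_hom (colimit.ι_post F (globalSections k X) i) s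
  rw [ConcreteCategory.isIso_iff_bijective]
  refine ⟨(injective_iff_map_eq_zero _).2 fun x hx => ?_, fun t => ?_⟩
  · obtain ⟨i, s, rfl⟩ := Concrete.colimit_exists_rep _ x
    have hs : (colimit.ι F i).hom.app (op ⊤) s = (colimit.ι F i).hom.app (op ⊤) 0 := by
      rw [map_zero]; exact (hpost i s).symm.trans hx
    exact (((colimit.isColimit _).eq_iff' s 0).2
      (SheafFilteredColimit.eventuallyEq_of_isCompact isCompact_univ hs)).trans (map_zero _)
  · obtain ⟨l, s, hs⟩ := SheafFilteredColimit.exists_colimit_ι_eq_of_compactSpace hX t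
    exact ⟨colimit.ι (F ⋙ globalSections k X) l s, (hpost l s).trans hs⟩
end

section
/- Let X be a Noetherian topological space, V an open subset, and {F_i}_{i∈I} a filtered inductive system of sheaves of k-modules on X. Then colim_i Γ(V; F_i) ≅ Γ(V; colim_i F_i), where the colimit on the right is taken in the category of sheaves. -/
/-!
On a Noetherian space every open set is quasi-compact, so it suffices to check the sheaf condition
on finite covers: a gluing over a finite subcover is also a gluing over the whole cover, since
adjoining any single further open set keeps the subcover finite. For a finite cover the sheaf
condition is a finite limit, and filtered colimits of modules commute with finite limits. Hence
the presheaf colimit of a filtered system of sheaves is already a sheaf, i.e. it is the colimit in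
sheaves, and its sections over `V` are by construction the colimit of the sections.
-/

open Set

open CategoryTheory CategoryTheory.Limits TopologicalSpace Opposite

/-- The sections functor over an open set `V` on sheaves of `k`-modules. -/
noncomputable def sectionsOver (k : Type) [CommRing k] {X : Type} [TopologicalSpace X]
    (V : Opens X) :
    Sheaf (Opens.grothendieckTopology X) (ModuleCat k) ⥤ ModuleCat k :=
  sheafToPresheaf _ _ ⋙ (evaluation (Opens X)ᵒᵖ (ModuleCat k)).obj (op V)

namespace TopCat.Presheaf

universe v u w

variable {X : TopCat.{u}} {C : Type*} [Category.{v} C]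

theorem existsUnique_gluing_of_isLimit {F : X.Presheaf (Type w)} {ι : Type u} {U : ι → Opens X}
    (hU : Nonempty (IsLimit (F.mapCone (Pairwise.cocone U).op))) {V : Opens X}
    (hUV : ∀ i, U i ≤ V) (hVU : V ≤ iSup U) (sf : ∀ i, F.obj (op (U i)))
    (hsf : IsCompatible F U sf) :
    ∃! s : F.obj (op V), ∀ i, F.map (homOfLE (hUV i)).op s = sf i := by
  obtain rfl := le_antisymm hVU (iSup_le hUV)
  show ∃! s, IsGluing F U sf s
  simp_rw [isGluing_iff_pairwise]
  exact (Types.isLimit_iff _).mp hU _ hsf.sectionPairwise.prop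

theorem isSheaf_of_isLimit_pairwise_of_finite [NoetherianSpace X]
    [HasLimitsOfSize.{u, u} C] {FC : C → C → Type*} {CC : C → Type w}
    [∀ A B, FunLike (FC A B) (CC A) (CC B)] [ConcreteCategory C FC]
    [(forget C).ReflectsIsomorphisms] [PreservesLimitsOfSize.{u, u} (forget C)]
    (F : X.Presheaf C)
    (hF : ∀ (ι : Type u) [Finite ι] (U : ι → Opens X),
      Nonempty (IsLimit (F.mapCone (Pairwise.cocone U).op))) :
    F.IsSheaf := by
  classical
  rw [isSheaf_iff_isSheaf_comp' (forget C), isSheaf_iff_isSheafUniqueGluing_types]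
  intro ι U sf hsf
  have hglue (t : Finset ι) (ht : iSup U ≤ ⨆ j : t, U j) :=
    existsUnique_gluing_of_isLimit (U := fun j : t => U j)
      ⟨isLimitOfPreserves (forget C) (hF t _).some⟩ (fun j => le_iSup U j) ht
      (fun j => sf j) fun j j' => hsf j j'
  obtain ⟨t, ht⟩ :=
    (NoetherianSpace.isCompact ((iSup U : Opens X) : Set X)).elim_finite_subcover
      (fun i => (U i : Set X)) (fun i => (U i).isOpen) (by simp)
  have hcover {t' : Finset ι} (htt' : t ⊆ t') : iSup U ≤ ⨆ j : t', U j := fun x hx => by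
    obtain ⟨j, hj, hxj⟩ := Set.mem_iUnion₂.mp (ht hx)
    exact Opens.mem_iSup.mpr ⟨⟨j, htt' hj⟩, hxj⟩
  obtain ⟨s, hs, hs_uniq⟩ := hglue t (hcover subset_rfl)
  refine ⟨s, fun i => ?_, fun s' hs' => hs_uniq s' fun j => hs' j⟩
  obtain ⟨s', hs', -⟩ := hglue (insert i t) (hcover (Finset.subset_insert i t))
  obtain rfl : s' = s := hs_uniq s' fun j => hs' ⟨j, Finset.mem_insert_of_mem j.2⟩
  exact hs' ⟨i, Finset.mem_insert_self i t⟩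

theorem isLimit_colimit_mapCone_pairwise {I : Type*} [Category I] [HasColimitsOfShape I C]
    [HasExactColimitsOfShape I C] (D : I ⥤ X.Presheaf C) (hD : ∀ i, (D.obj i).IsSheaf)
    {ι : Type u} [Finite ι] (U : ι → Opens X) :
    Nonempty (IsLimit ((colimit D).mapCone (Pairwise.cocone U).op)) := by
  classical
  have := Fintype.ofFinite ι
  have hflip : IsLimit (D.flip.mapCone (Pairwise.cocone U).op) :=
    evaluationJointlyReflectsLimits _ fun i => ((hD i).isSheafPairwiseIntersections U).some
  exact ⟨IsLimit.mapConeEquiv (colimitIsoFlipCompColim D).symm (isLimitOfPreserves colim hflip)⟩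

theorem isSheaf_colimit [NoetherianSpace X]
    [HasLimitsOfSize.{u, u} C] {FC : C → C → Type*} {CC : C → Type w}
    [∀ A B, FunLike (FC A B) (CC A) (CC B)] [ConcreteCategory C FC]
    [(forget C).ReflectsIsomorphisms] [PreservesLimitsOfSize.{u, u} (forget C)]
    {I : Type*} [Category I] [HasColimitsOfShape I C] [HasExactColimitsOfShape I C]
    (D : I ⥤ X.Presheaf C) (hD : ∀ i, (D.obj i).IsSheaf) :
    (colimit D).IsSheaf :=
  isSheaf_of_isLimit_pairwise_of_finite _ fun _ _ U => isLimit_colimit_mapCone_pairwise D hD U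

end TopCat.Presheaf

/-- On a Noetherian space, sections over any open set commute with filtered colimits of
sheaves: `colim_i Γ(V;F_i) ≅ Γ(V; colim_i F_i)`. -/
theorem stmt_9 {k : Type} [CommRing k] {X : Type} [TopologicalSpace X]
    [TopologicalSpace.NoetherianSpace X] (V : Opens X)
    {I : Type} [SmallCategory I] [IsFiltered I]
    (F : I ⥤ Sheaf (Opens.grothendieckTopology X) (ModuleCat k)) :
    IsIso (colimit.post F (sectionsOver k V)) := by
  have hsheaf : Presheaf.IsSheaf (Opens.grothendieckTopology X)
      (colimit (F ⋙ sheafToPresheaf _ _)) :=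
    TopCat.Presheaf.isSheaf_colimit (X := TopCat.of X) _ fun i => by exact (F.obj i).property
  have : CreatesColimit F (sheafToPresheaf _ _) :=
    createsColimitOfFullyFaithfulOfIso ⟨_, hsheaf⟩ (Iso.refl _)
  have : PreservesColimit F (sectionsOver k V) := by
    unfold sectionsOver
    infer_instance
  infer_instance
end
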